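/- Let 𝒯 be a selfadjoint set (𝒯* = 𝒯) of bounded operators on a complex separable Hilbert space H and let {P_n}_{n∈ℕ} be a sequence of non-zero finite-rank orthogonal projections on H. Then the following four conditions are equivalent: (1) ‖A P_n − P_n A‖₁ / ‖P_n‖₁ → 0 for all A ∈ 𝒯; (2) ‖A P_n − P_n A‖₂ / ‖P_n‖₂ → 0 for all A ∈ 𝒯; (3) ‖(1 − P_n) A P_n‖₁ / ‖P_n‖₁ → 0 for all A ∈ 𝒯; (4) ‖(1 − P_n) A P_n‖₂ / ‖P_n‖₂ → 0 for all A ∈ 𝒯. In particular, {P_n} is a Følner sequence for 𝒯 if and only if any one of these conditions holds. -/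

import Mathlib

open Filter Topology
open scoped ComplexOrder

noncomputable section

variable {H : Type*} [NormedAddCommGroup H] [InnerProductSpace ℂ H] [CompleteSpace H]

/-- `P` is a finite-rank orthogonal projection on the Hilbert space `H`. -/
def IsFinRankProj (P : H →L[ℂ] H) : Prop :=
  IsIdempotentElem P ∧ IsSelfAdjoint P ∧ FiniteDimensional ℂ (LinearMap.range (P : H →ₗ[ℂ] H))

/-- The Hilbert–Schmidt norm of an operator, computed with respect to the Hilbert basis `b`
(for Hilbert–Schmidt operators it is independent of the choice of `b`). -/
def hsNorm {ι : Type*} (b : HilbertBasis ι ℂ H) (T : H →L[ℂ] H) : ℝ :=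
  Real.sqrt (∑' i, ‖T (b i)‖ ^ 2)

/-- The canonical trace of an operator, computed with respect to the Hilbert basis `b`
(for trace-class operators it is independent of the choice of `b`). -/
def trOp {ι : Type*} (b : HilbertBasis ι ℂ H) (T : H →L[ℂ] H) : ℂ :=
  ∑' i, (inner ℂ (b i) (T (b i)) : ℂ)

/-- `{P n}` is a Følner sequence (of non-zero finite-rank orthogonal projections)
for the set of operators `S ⊆ L(H)`. -/
def IsFolnerSeq {ι : Type*} (b : HilbertBasis ι ℂ H) (S : Set (H →L[ℂ] H))
    (P : ℕ → H →L[ℂ] H) : Prop :=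
  (∀ n, IsFinRankProj (P n) ∧ P n ≠ 0) ∧
  ∀ A ∈ S, Tendsto (fun n => hsNorm b (A * P n - P n * A) / hsNorm b (P n)) atTop (𝓝 0)

/-- A proper Følner sequence: an increasing Følner sequence converging strongly to `1`. -/
def IsProperFolnerSeq {ι : Type*} (b : HilbertBasis ι ℂ H) (S : Set (H →L[ℂ] H))
    (P : ℕ → H →L[ℂ] H) : Prop :=
  IsFolnerSeq b S P ∧ Monotone (fun n => LinearMap.range (P n : H →ₗ[ℂ] H)) ∧
    ∀ x : H, Tendsto (fun n => P n x) atTop (𝓝 x)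

/-- The trace-class norm `‖T‖₁ = Tr √(T*T)`, computed with respect to the Hilbert basis `b`. -/
def trNorm {ι : Type*} (b : HilbertBasis ι ℂ H) (T : H →L[ℂ] H) : ℝ :=
  (trOp b (cfc Real.sqrt (star T * T))).re

/-!
For a rank-`d` orthogonal projection `P` one has `‖P‖₁ = d` and `‖P‖₂ = √d`. The commutator
`[A, P] = (1 - P) A P - P A (1 - P)` is the difference of two corners, the second one being the
adjoint of the corner `(1 - P) A* P`, while conversely `(1 - P) [A, P] = (1 - P) A P` and
`‖1 - P‖ ≤ 1`. For a selfadjoint set `𝒯` this makes the commutator conditions equivalent to the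
corner conditions, in either norm; for `‖·‖₂` the two corners are even orthogonal, so that
`‖[A, P]‖₂² = ‖(1 - P) A P‖₂² + ‖(1 - P) A* P‖₂²`. For the corner `C = (1 - P) A P`, of rank at most
`d`, the estimates `‖C‖₂² ≤ ‖A‖ ‖C‖₁` and `‖C‖₁ ≤ √d ‖C‖₂` then compare the two normalised corner
conditions.

Both norms are evaluated through a finite singular value decomposition `T = ∑ₖ σₖ ⟪eₖ, ·⟫ fₖ`,
which every finite-rank operator has (diagonalise `T T*` on the range of `T`): `‖T‖₁ = ∑ₖ σₖ`,
`‖T‖₂² = ∑ₖ σₖ²`, and the trace-norm inequalities follow from the duality bound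
`∑ₘ |⟪uₘ, B T vₘ⟫| ≤ ‖B‖ ‖T‖₁` over finite orthonormal families.
-/

end

open scoped InnerProductSpace
open InnerProductSpace (rankOne)

variable {H : Type*} [NormedAddCommGroup H] [InnerProductSpace ℂ H]

theorem Orthonormal.norm_sum_smul_sq {𝕜 E ι : Type*} [RCLike 𝕜] [NormedAddCommGroup E]
    [InnerProductSpace 𝕜 E] [Fintype ι] {v : ι → E} (hv : Orthonormal 𝕜 v) (c : ι → 𝕜) :
    ‖∑ k, c k • v k‖ ^ 2 = ∑ k, ‖c k‖ ^ 2 := by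
  rw [← inner_self_eq_norm_sq (𝕜 := 𝕜), hv.inner_sum, map_sum]
  simp only [RCLike.conj_mul]
  norm_cast

theorem Orthonormal.sum_norm_inner_mul_norm_inner_le {𝕜 E M : Type*} [RCLike 𝕜]
    [NormedAddCommGroup E] [InnerProductSpace 𝕜 E] [Fintype M] {u v : M → E}
    (hu : Orthonormal 𝕜 u) (hv : Orthonormal 𝕜 v) (x y : E) :
    ∑ m, ‖⟪x, v m⟫_𝕜‖ * ‖⟪u m, y⟫_𝕜‖ ≤ ‖x‖ * ‖y‖ := by
  calc ∑ m, ‖⟪x, v m⟫_𝕜‖ * ‖⟪u m, y⟫_𝕜‖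
      ≤ √(∑ m, ‖⟪x, v m⟫_𝕜‖ ^ 2) * √(∑ m, ‖⟪u m, y⟫_𝕜‖ ^ 2) :=
        Real.sum_mul_le_sqrt_mul_sqrt _ _ _
    _ ≤ √(‖x‖ ^ 2) * √(‖y‖ ^ 2) := by
        gcongr
        · simpa only [norm_inner_symm] using hv.sum_inner_products_le x
        · exact hu.sum_inner_products_le y
    _ = ‖x‖ * ‖y‖ := by rw [Real.sqrt_sq (norm_nonneg _), Real.sqrt_sq (norm_nonneg _)]

theorem orthonormal_smul_inv_norm {𝕜 E ι : Type*} [RCLike 𝕜] [NormedAddCommGroup E]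
    [InnerProductSpace 𝕜 E] {w : ι → E} (hw : ∀ i, w i ≠ 0)
    (horth : Pairwise fun i j => ⟪w i, w j⟫_𝕜 = 0) :
    Orthonormal 𝕜 fun i => (‖w i‖⁻¹ : 𝕜) • w i :=
  ⟨fun i => norm_smul_inv_norm (hw i), fun i j hij => by
    simp only [inner_smul_left, inner_smul_right, horth hij, mul_zero]⟩

theorem HilbertBasis.hasSum_norm_inner_sq {𝕜 E ι : Type*} [RCLike 𝕜] [NormedAddCommGroup E]
    [InnerProductSpace 𝕜 E] (b : HilbertBasis ι 𝕜 E) (x : E) :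
    HasSum (fun i => ‖⟪x, b i⟫_𝕜‖ ^ 2) (‖x‖ ^ 2) := by
  have h := b.hasSum_inner_mul_inner x x
  simp_rw [← inner_conj_symm (b _) x, RCLike.mul_conj, inner_self_eq_norm_sq_to_K] at h
  exact_mod_cast h

theorem HilbertBasis.hasSum_inner_rankOne_apply {𝕜 E ι : Type*} [RCLike 𝕜]
    [NormedAddCommGroup E] [InnerProductSpace 𝕜 E] (b : HilbertBasis ι 𝕜 E) (u v : E) :
    HasSum (fun i => ⟪b i, rankOne 𝕜 u v (b i)⟫_𝕜) ⟪v, u⟫_𝕜 := by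
  simpa [inner_smul_right, mul_comm] using b.hasSum_inner_mul_inner v u

theorem IsStarProjection.norm_sq_add_norm_sq_one_sub {𝕜 E : Type*} [RCLike 𝕜]
    [NormedAddCommGroup E] [InnerProductSpace 𝕜 E] [CompleteSpace E] {Q : E →L[𝕜] E}
    (hQ : IsStarProjection Q) (y : E) : ‖Q y‖ ^ 2 + ‖(1 - Q) y‖ ^ 2 = ‖y‖ ^ 2 := by
  have horth : ⟪Q y, (1 - Q) y⟫_𝕜 = 0 := by
    rw [show ⟪Q y, (1 - Q) y⟫_𝕜 = ⟪y, (Q * (1 - Q)) y⟫_𝕜 from hQ.isSelfAdjoint.isSymmetric _ _,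
      hQ.mul_one_sub_self, zero_apply, inner_zero_right]
  have h := norm_add_sq_eq_norm_sq_add_norm_sq_of_inner_eq_zero _ _ horth
  rw [← add_apply, add_sub_cancel, one_apply_eq_self] at h
  rw [sq, sq, sq, h]

theorem commutator_eq_corner_sub_corner {R : Type*} [Ring R] (A P : R) :
    A * P - P * A = (1 - P) * A * P - P * A * (1 - P) := by
  noncomm_ring

theorem star_corner {R : Type*} [Ring R] [StarRing R] {P : R} (hP : IsSelfAdjoint P) (A : R) :
    star ((1 - P) * star A * P) = P * A * (1 - P) := by
  simp [mul_assoc, hP.star_eq]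

theorem IsStarProjection.one_sub_mul_commutator {R : Type*} [Ring R] [Star R] {P : R}
    (hP : IsStarProjection P) (A : R) : (1 - P) * (A * P - P * A) = (1 - P) * A * P := by
  rw [mul_sub, ← mul_assoc, ← mul_assoc, hP.one_sub_mul_self, zero_mul, sub_zero]

theorem IsStarProjection.mul_commutator {R : Type*} [Ring R] [Star R] {P : R}
    (hP : IsStarProjection P) (A : R) : P * (A * P - P * A) = -(P * A * (1 - P)) := by
  rw [mul_sub, ← mul_assoc, ← mul_assoc, hP.isIdempotentElem.eq, mul_one_sub, neg_sub]

theorem squeeze_zero_div {α : Type*} {l : Filter α} {x y c : α → ℝ} (hx : ∀ n, 0 ≤ x n)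
    (hc : ∀ n, 0 < c n) (hxy : ∀ n, x n ≤ y n) (hy : Tendsto (fun n => y n / c n) l (𝓝 0)) :
    Tendsto (fun n => x n / c n) l (𝓝 0) :=
  squeeze_zero (fun n => div_nonneg (hx n) (hc n).le)
    (fun n => div_le_div_of_nonneg_right (hxy n) (hc n).le) hy

instance finiteDimensional_range_mul_of_left (X Y : H →L[ℂ] H)
    [FiniteDimensional ℂ (X : H →ₗ[ℂ] H).range] :
    FiniteDimensional ℂ ((X * Y : H →L[ℂ] H) : H →ₗ[ℂ] H).range :=
  Submodule.finiteDimensional_of_le (S₂ := (X : H →ₗ[ℂ] H).range)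
    (LinearMap.range_comp_le_range _ _)

instance finiteDimensional_range_mul_of_right (X Y : H →L[ℂ] H)
    [FiniteDimensional ℂ (Y : H →ₗ[ℂ] H).range] :
    FiniteDimensional ℂ ((X * Y : H →L[ℂ] H) : H →ₗ[ℂ] H).range := by
  rw [show ((X * Y : H →L[ℂ] H) : H →ₗ[ℂ] H) = (X : H →ₗ[ℂ] H) ∘ₗ (Y : H →ₗ[ℂ] H) from rfl,
    LinearMap.range_comp]
  infer_instance

instance finiteDimensional_range_sub (X Y : H →L[ℂ] H) [FiniteDimensional ℂ (X : H →ₗ[ℂ] H).range]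
    [FiniteDimensional ℂ (Y : H →ₗ[ℂ] H).range] :
    FiniteDimensional ℂ ((X - Y : H →L[ℂ] H) : H →ₗ[ℂ] H).range := by
  refine Submodule.finiteDimensional_of_le (S₂ := (X : H →ₗ[ℂ] H).range ⊔ (Y : H →ₗ[ℂ] H).range) ?_
  rw [ContinuousLinearMap.toLinearMap_sub, sub_eq_add_neg, ← LinearMap.range_neg (Y : H →ₗ[ℂ] H)]
  exact LinearMap.range_add_le _ _

theorem finrank_range_mul_le (X Y : H →L[ℂ] H) [FiniteDimensional ℂ (Y : H →ₗ[ℂ] H).range] :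
    Module.finrank ℂ ((X * Y : H →L[ℂ] H) : H →ₗ[ℂ] H).range
      ≤ Module.finrank ℂ (Y : H →ₗ[ℂ] H).range := by
  rw [show ((X * Y : H →L[ℂ] H) : H →ₗ[ℂ] H) = (X : H →ₗ[ℂ] H) ∘ₗ (Y : H →ₗ[ℂ] H) from rfl,
    LinearMap.range_comp]
  exact Submodule.finrank_map_le _ _

theorem trOp_sum_smul_rankOne {ι κ : Type*} [Fintype κ] (b : HilbertBasis ι ℂ H) (c : κ → ℂ)
    (u v : κ → H) : trOp b (∑ k, c k • rankOne ℂ (u k) (v k)) = ∑ k, c k * ⟪v k, u k⟫_ℂ := by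
  simp only [trOp, sum_apply, smul_apply, inner_sum, inner_smul_right]
  exact (hasSum_sum fun k _ => (b.hasSum_inner_rankOne_apply (u k) (v k)).mul_left (c k)).tsum_eq

theorem hsNorm_nonneg {ι : Type*} (b : HilbertBasis ι ℂ H) (T : H →L[ℂ] H) : 0 ≤ hsNorm b T :=
  Real.sqrt_nonneg _

theorem hsNorm_sq {ι : Type*} (b : HilbertBasis ι ℂ H) (T : H →L[ℂ] H) :
    hsNorm b T ^ 2 = ∑' i, ‖T (b i)‖ ^ 2 :=
  Real.sq_sqrt (tsum_nonneg fun _ => sq_nonneg _)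

theorem hsNorm_neg {ι : Type*} (b : HilbertBasis ι ℂ H) (T : H →L[ℂ] H) :
    hsNorm b (-T) = hsNorm b T := by
  simp [hsNorm]

structure SVD (T : H →L[ℂ] H) where
  ι : Type
  [fintype : Fintype ι]
  σ : ι → ℝ
  σ_pos : ∀ k, 0 < σ k
  e : ι → H
  f : ι → H
  orthonormal_e : Orthonormal ℂ e
  orthonormal_f : Orthonormal ℂ f
  eq_sum : T = ∑ k, (σ k : ℂ) • rankOne ℂ (f k) (e k)

attribute [instance] SVD.fintype

namespace SVD

variable {T : H →L[ℂ] H} (S : SVD T) {ι : Type*} (b : HilbertBasis ι ℂ H)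

theorem apply (x : H) : T x = ∑ k, ((S.σ k : ℂ) * ⟪S.e k, x⟫_ℂ) • S.f k := by
  conv_lhs => rw [S.eq_sum]
  simp only [sum_apply, smul_apply, InnerProductSpace.rankOne_apply, smul_smul]

theorem apply_e (k : S.ι) : T (S.e k) = (S.σ k : ℂ) • S.f k := by
  rw [S.apply, Finset.sum_eq_single k]
  · simp [S.orthonormal_e.norm_eq_one]
  · intro j _ hj
    simp [S.orthonormal_e.inner_eq_zero hj]
  · simp

protected def star [CompleteSpace H] : SVD (star T) where
  ι := S.ι
  σ := S.σ
  σ_pos := S.σ_pos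
  e := S.f
  f := S.e
  orthonormal_e := S.orthonormal_f
  orthonormal_f := S.orthonormal_e
  eq_sum := by
    simp [S.eq_sum, star_sum, ContinuousLinearMap.star_eq_adjoint]

theorem star_apply [CompleteSpace H] (y : H) :
    star T y = ∑ k, ((S.σ k : ℂ) * ⟪S.f k, y⟫_ℂ) • S.e k :=
  S.star.apply y

theorem norm_sq_apply (x : H) : ‖T x‖ ^ 2 = ∑ k, S.σ k ^ 2 * ‖⟪S.e k, x⟫_ℂ‖ ^ 2 := by
  simp [S.apply, S.orthonormal_f.norm_sum_smul_sq, mul_pow]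

theorem σ_le_opNorm (k : S.ι) : S.σ k ≤ ‖T‖ := by
  have h := T.le_opNorm (S.e k)
  rwa [S.apply_e, norm_smul, S.orthonormal_f.norm_eq_one, S.orthonormal_e.norm_eq_one,
    Complex.norm_real, Real.norm_of_nonneg (S.σ_pos k).le, mul_one, mul_one] at h

theorem f_mem_range (k : S.ι) : S.f k ∈ (T : H →ₗ[ℂ] H).range :=
  ⟨(S.σ k : ℂ)⁻¹ • S.e k, by
    rw [map_smul, ContinuousLinearMap.coe_coe, S.apply_e, smul_smul,
      inv_mul_cancel₀ (Complex.ofReal_ne_zero.2 (S.σ_pos k).ne'), one_smul]⟩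

theorem card_le_finrank [FiniteDimensional ℂ (T : H →ₗ[ℂ] H).range] :
    Fintype.card S.ι ≤ Module.finrank ℂ (T : H →ₗ[ℂ] H).range :=
  (S.orthonormal_f.codRestrict _ S.f_mem_range).linearIndependent.fintype_card_le_finrank

theorem inner_f_apply (k : S.ι) (x : H) : ⟪S.f k, T x⟫_ℂ = S.σ k * ⟪S.e k, x⟫_ℂ := by
  rw [S.apply, S.orthonormal_f.inner_right_fintype]

theorem cfc_sqrt_star_mul_self [CompleteSpace H] :
    cfc Real.sqrt (star T * T) = ∑ k, (S.σ k : ℂ) • rankOne ℂ (S.e k) (S.e k) := by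
  set R := ∑ k, (S.σ k : ℂ) • rankOne ℂ (S.e k) (S.e k)
  have hR : ∀ x, R x = ∑ k, ((S.σ k : ℂ) * ⟪S.e k, x⟫_ℂ) • S.e k := fun x => by
    simp only [R, sum_apply, smul_apply, InnerProductSpace.rankOne_apply, smul_smul]
  have hR_sq : R * R = star T * T := by
    ext x
    change R (R x) = star T (T x)
    simp only [hR, S.star_apply, S.orthonormal_e.inner_right_fintype, S.inner_f_apply]
  have hR_nonneg : 0 ≤ R := by
    rw [ContinuousLinearMap.nonneg_iff_isPositive]
    refine ContinuousLinearMap.isPositive_sum _ fun k _ => ?_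
    exact (InnerProductSpace.isPositive_rankOne_self _).smul_of_nonneg
      (by exact_mod_cast (S.σ_pos k).le)
  rw [← cfcₙ_eq_cfc, ← CFC.sqrt_eq_real_sqrt _ (star_mul_self_nonneg T)]
  exact CFC.sqrt_unique hR_sq hR_nonneg

theorem trNorm_eq [CompleteSpace H] : trNorm b T = ∑ k, S.σ k := by
  rw [trNorm, S.cfc_sqrt_star_mul_self, trOp_sum_smul_rankOne]
  simp [inner_self_eq_norm_sq_to_K, S.orthonormal_e.norm_eq_one]

theorem hasSum_norm_sq_apply : HasSum (fun i => ‖T (b i)‖ ^ 2) (∑ k, S.σ k ^ 2) := by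
  have h := hasSum_sum fun k (_ : k ∈ Finset.univ) =>
    (b.hasSum_norm_inner_sq (S.e k)).mul_left (S.σ k ^ 2)
  simp only [S.orthonormal_e.norm_eq_one, one_pow, mul_one] at h
  simpa only [S.norm_sq_apply] using h

theorem hsNorm_sq_eq : hsNorm b T ^ 2 = ∑ k, S.σ k ^ 2 := by
  rw [hsNorm, (S.hasSum_norm_sq_apply b).tsum_eq,
    Real.sq_sqrt (Finset.sum_nonneg fun k _ => sq_nonneg _)]

theorem norm_inner_f_apply_e (k : S.ι) : ‖⟪S.f k, T (S.e k)⟫_ℂ‖ = S.σ k := by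
  rw [S.inner_f_apply, inner_self_eq_norm_sq_to_K, S.orthonormal_e.norm_eq_one]
  simp [(S.σ_pos k).le]

theorem sum_norm_inner_le {M : Type*} [Fintype M] {u v : M → H} (hu : Orthonormal ℂ u)
    (hv : Orthonormal ℂ v) (B : H →L[ℂ] H) :
    ∑ m, ‖⟪u m, B (T (v m))⟫_ℂ‖ ≤ ‖B‖ * ∑ k, S.σ k := by
  have hentry : ∀ m, ⟪u m, B (T (v m))⟫_ℂ
      = ∑ k, (S.σ k : ℂ) * (⟪S.e k, v m⟫_ℂ * ⟪u m, B (S.f k)⟫_ℂ) := fun m => by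
    simp only [S.apply, map_sum, map_smul, inner_sum, inner_smul_right, mul_assoc]
  calc ∑ m, ‖⟪u m, B (T (v m))⟫_ℂ‖
      ≤ ∑ m, ∑ k, S.σ k * (‖⟪S.e k, v m⟫_ℂ‖ * ‖⟪u m, B (S.f k)⟫_ℂ‖) := by
        refine Finset.sum_le_sum fun m _ => (hentry m ▸ norm_sum_le _ _).trans_eq ?_
        refine Finset.sum_congr rfl fun k _ => ?_
        rw [norm_mul, norm_mul, Complex.norm_real, Real.norm_of_nonneg (S.σ_pos k).le]
    _ = ∑ k, S.σ k * ∑ m, ‖⟪S.e k, v m⟫_ℂ‖ * ‖⟪u m, B (S.f k)⟫_ℂ‖ := by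
        rw [Finset.sum_comm]
        simp only [Finset.mul_sum]
    _ ≤ ∑ k, S.σ k * (‖S.e k‖ * ‖B (S.f k)‖) := by
        gcongr with k
        · exact (S.σ_pos k).le
        · exact hu.sum_norm_inner_mul_norm_inner_le hv _ _
    _ ≤ ∑ k, S.σ k * ‖B‖ := by
        gcongr with k
        · exact (S.σ_pos k).le
        · simpa [S.orthonormal_e.norm_eq_one, S.orthonormal_f.norm_eq_one] using B.le_opNorm (S.f k)
    _ = ‖B‖ * ∑ k, S.σ k := by rw [← Finset.sum_mul, mul_comm]

theorem sum_norm_inner_apply_le {M : Type*} [Fintype M] {u v : M → H} (hu : Orthonormal ℂ u)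
    (hv : Orthonormal ℂ v) : ∑ m, ‖⟪u m, T (v m)⟫_ℂ‖ ≤ ∑ k, S.σ k :=
  (S.sum_norm_inner_le hu hv (ContinuousLinearMap.id ℂ H)).trans <|
    mul_le_of_le_one_left (Finset.sum_nonneg fun k _ => (S.σ_pos k).le)
      ContinuousLinearMap.norm_id_le

end SVD

section Existence

variable [CompleteSpace H] {T : H →L[ℂ] H}

open Classical in
/-- As `T x = ∑ⱼ ⟪T* hⱼ, x⟫ hⱼ`, the nonzero `T* hⱼ`, once normalised, are the vectors `eⱼ`. -/
noncomputable def SVD.ofOrthonormal {κ : Type} [Fintype κ] (h : κ → H) (hh : Orthonormal ℂ h)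
    (hspan : ∀ x, T x = ∑ j, ⟪h j, T x⟫_ℂ • h j)
    (horth : Pairwise fun i j => ⟪star T (h i), star T (h j)⟫_ℂ = 0) : SVD T where
  ι := {j // star T (h j) ≠ 0}
  σ j := ‖star T (h j)‖
  σ_pos j := norm_pos_iff.2 j.2
  e j := (‖star T (h j)‖⁻¹ : ℂ) • star T (h j)
  f j := h j
  orthonormal_e := orthonormal_smul_inv_norm (fun j => j.2)
    (horth.comp_of_injective Subtype.val_injective)
  orthonormal_f := hh.comp _ Subtype.val_injective
  eq_sum := by
    ext x
    have hterm : ∀ j, ⟪h j, T x⟫_ℂ • h j = ⟪star T (h j), x⟫_ℂ • h j := fun j => by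
      rw [ContinuousLinearMap.star_eq_adjoint, ContinuousLinearMap.adjoint_inner_left]
    rw [hspan x]
    simp only [hterm]
    rw [← Fintype.sum_subtype_add_sum_subtype (fun j => star T (h j) ≠ 0),
      Fintype.sum_eq_zero (fun j : {j // ¬star T (h j) ≠ 0} => ⟪star T (h j), x⟫_ℂ • h j)
        (fun j => by rw [not_not.1 j.2, inner_zero_left, zero_smul]), add_zero, sum_apply]
    refine Finset.sum_congr rfl fun j _ => ?_
    have : (‖star T (h j)‖ : ℂ) ≠ 0 := Complex.ofReal_ne_zero.2 (norm_ne_zero_iff.2 j.2)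
    simp only [smul_apply, InnerProductSpace.rankOne_apply, inner_smul_left, smul_smul,
      map_inv₀, Complex.conj_ofReal]
    rw [mul_inv_cancel_left₀ this]

/-- An eigenbasis of `T T*` restricted to the range of `T` will do. -/
theorem exists_orthonormalBasis_range_pairwise_inner_star_eq_zero
    [FiniteDimensional ℂ (T : H →ₗ[ℂ] H).range] :
    ∃ (n : ℕ) (g : OrthonormalBasis (Fin n) ℂ (T : H →ₗ[ℂ] H).range),
      Pairwise fun i j => ⟪star T (g i), star T (g j)⟫_ℂ = 0 := by
  set W := (T : H →ₗ[ℂ] H).range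
  let M : W →ₗ[ℂ] W := ((T * star T : H →L[ℂ] H) : H →ₗ[ℂ] H).restrict
    (fun x _ => ⟨star T x, rfl⟩)
  have hM : M.IsSymmetric := fun x y => by
    simp only [M, Submodule.coe_inner]
    exact (IsSelfAdjoint.mul_star_self T).isSymmetric x y
  refine ⟨_, hM.eigenvectorBasis rfl, fun i j hij => ?_⟩
  set g := hM.eigenvectorBasis rfl
  have hMj : (T * star T) (g j) = (hM.eigenvalues rfl j : ℂ) • (g j : H) :=
    congrArg Subtype.val (hM.apply_eigenvectorBasis rfl j)
  calc ⟪star T (g i), star T (g j)⟫_ℂ = ⟪(g i : H), (T * star T) (g j)⟫_ℂ := by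
        rw [ContinuousLinearMap.star_eq_adjoint, ContinuousLinearMap.adjoint_inner_left]; rfl
    _ = 0 := by
        rw [hMj, inner_smul_right, ← Submodule.coe_inner, g.orthonormal.inner_eq_zero hij,
          mul_zero]

theorem SVD.nonempty (T : H →L[ℂ] H) [FiniteDimensional ℂ (T : H →ₗ[ℂ] H).range] :
    Nonempty (SVD T) := by
  obtain ⟨n, g, hg⟩ := exists_orthonormalBasis_range_pairwise_inner_star_eq_zero (T := T)
  refine ⟨SVD.ofOrthonormal (fun i => (g i : H))
    (g.orthonormal.comp_linearIsometry (T : H →ₗ[ℂ] H).range.subtypeₗᵢ) (fun x => ?_) hg⟩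
  have hx := (Submodule.starProjection_eq_self_iff (K := (T : H →ₗ[ℂ] H).range)).2
    (LinearMap.mem_range_self (T : H →ₗ[ℂ] H) x)
  rw [g.starProjection_eq_sum_rankOne] at hx
  simpa using hx.symm

end Existence

section FiniteRank

variable [CompleteSpace H] {ι : Type*} (b : HilbertBasis ι ℂ H) (T : H →L[ℂ] H)
  [FiniteDimensional ℂ (T : H →ₗ[ℂ] H).range]

theorem trNorm_nonneg : 0 ≤ trNorm b T := by
  obtain ⟨S⟩ := SVD.nonempty T
  rw [S.trNorm_eq]
  exact Finset.sum_nonneg fun k _ => (S.σ_pos k).le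

theorem trNorm_star : trNorm b (star T) = trNorm b T := by
  obtain ⟨S⟩ := SVD.nonempty T
  rw [S.star.trNorm_eq, S.trNorm_eq]
  rfl

theorem hsNorm_star : hsNorm b (star T) = hsNorm b T := by
  obtain ⟨S⟩ := SVD.nonempty T
  rw [hsNorm, hsNorm, (S.star.hasSum_norm_sq_apply b).tsum_eq, (S.hasSum_norm_sq_apply b).tsum_eq]
  rfl

theorem summable_norm_sq_apply : Summable fun i => ‖T (b i)‖ ^ 2 := by
  obtain ⟨S⟩ := SVD.nonempty T
  exact (S.hasSum_norm_sq_apply b).summable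

theorem trNorm_mul_le (B : H →L[ℂ] H) : trNorm b (B * T) ≤ ‖B‖ * trNorm b T := by
  obtain ⟨S⟩ := SVD.nonempty T
  obtain ⟨R⟩ := SVD.nonempty (B * T)
  rw [R.trNorm_eq, S.trNorm_eq, ← Finset.sum_congr rfl fun k _ => R.norm_inner_f_apply_e k]
  exact S.sum_norm_inner_le R.orthonormal_f R.orthonormal_e B

theorem trNorm_sub_le (Y : H →L[ℂ] H) [FiniteDimensional ℂ (Y : H →ₗ[ℂ] H).range] :
    trNorm b (T - Y) ≤ trNorm b T + trNorm b Y := by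
  obtain ⟨S⟩ := SVD.nonempty T
  obtain ⟨S'⟩ := SVD.nonempty Y
  obtain ⟨R⟩ := SVD.nonempty (T - Y)
  rw [R.trNorm_eq, S.trNorm_eq, S'.trNorm_eq]
  calc ∑ k, R.σ k = ∑ k, ‖⟪R.f k, T (R.e k)⟫_ℂ - ⟪R.f k, Y (R.e k)⟫_ℂ‖ := by
        simp only [← inner_sub_right, ← sub_apply, R.norm_inner_f_apply_e]
    _ ≤ ∑ k, (‖⟪R.f k, T (R.e k)⟫_ℂ‖ + ‖⟪R.f k, Y (R.e k)⟫_ℂ‖) :=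
        Finset.sum_le_sum fun k _ => norm_sub_le _ _
    _ ≤ ∑ k, S.σ k + ∑ k, S'.σ k := by
        rw [Finset.sum_add_distrib]
        exact add_le_add (S.sum_norm_inner_apply_le R.orthonormal_f R.orthonormal_e)
          (S'.sum_norm_inner_apply_le R.orthonormal_f R.orthonormal_e)

theorem hsNorm_sq_le_opNorm_mul_trNorm : hsNorm b T ^ 2 ≤ ‖T‖ * trNorm b T := by
  obtain ⟨S⟩ := SVD.nonempty T
  rw [S.hsNorm_sq_eq, S.trNorm_eq, Finset.mul_sum]
  exact Finset.sum_le_sum fun k _ => by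
    rw [sq]; exact mul_le_mul_of_nonneg_right (S.σ_le_opNorm k) (S.σ_pos k).le

theorem trNorm_le_sqrt_finrank_mul_hsNorm :
    trNorm b T ≤ √(Module.finrank ℂ (T : H →ₗ[ℂ] H).range) * hsNorm b T := by
  obtain ⟨S⟩ := SVD.nonempty T
  rw [hsNorm, (S.hasSum_norm_sq_apply b).tsum_eq, ← Real.sqrt_mul (Nat.cast_nonneg _),
    S.trNorm_eq]
  refine Real.le_sqrt_of_sq_le (sq_sum_le_card_mul_sum_sq.trans ?_)
  gcongr
  exact_mod_cast S.card_le_finrank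

theorem trNorm_mul_le_sqrt_finrank_mul_hsNorm (X : H →L[ℂ] H) :
    trNorm b (X * T) ≤ √(Module.finrank ℂ (T : H →ₗ[ℂ] H).range) * hsNorm b (X * T) := by
  refine (trNorm_le_sqrt_finrank_mul_hsNorm b _).trans ?_
  gcongr
  · exact Real.sqrt_nonneg _
  · exact finrank_range_mul_le X T

theorem hsNorm_sq_eq_add_of_isStarProjection {P : H →L[ℂ] H} (hP : IsStarProjection P) :
    hsNorm b T ^ 2 = hsNorm b (P * T) ^ 2 + hsNorm b ((1 - P) * T) ^ 2 := by
  rw [hsNorm_sq, hsNorm_sq, hsNorm_sq, ← (summable_norm_sq_apply b _).tsum_add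
    (summable_norm_sq_apply b _)]
  exact tsum_congr fun i => (hP.norm_sq_add_norm_sq_one_sub _).symm

end FiniteRank

section Projection

variable [CompleteSpace H] {P : H →L[ℂ] H} [FiniteDimensional ℂ (P : H →ₗ[ℂ] H).range]

noncomputable def SVD.ofIsStarProjection (hP : IsStarProjection P) : SVD P where
  ι := Fin (Module.finrank ℂ (P : H →ₗ[ℂ] H).range)
  σ _ := 1
  σ_pos _ := one_pos
  e i := stdOrthonormalBasis ℂ (P : H →ₗ[ℂ] H).range i
  f i := stdOrthonormalBasis ℂ (P : H →ₗ[ℂ] H).range i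
  orthonormal_e := (stdOrthonormalBasis ℂ _).orthonormal.comp_linearIsometry
    (P : H →ₗ[ℂ] H).range.subtypeₗᵢ
  orthonormal_f := (stdOrthonormalBasis ℂ _).orthonormal.comp_linearIsometry
    (P : H →ₗ[ℂ] H).range.subtypeₗᵢ
  eq_sum := by
    obtain ⟨_, hP_eq⟩ := isStarProjection_iff_eq_starProjection_range.1 hP
    conv_lhs => rw [hP_eq, (stdOrthonormalBasis ℂ _).starProjection_eq_sum_rankOne]
    simp

variable {ι : Type*} (b : HilbertBasis ι ℂ H) (hP : IsStarProjection P)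
include hP

theorem trNorm_of_isStarProjection : trNorm b P = Module.finrank ℂ (P : H →ₗ[ℂ] H).range := by
  simp only [(SVD.ofIsStarProjection hP).trNorm_eq, SVD.ofIsStarProjection, Finset.sum_const,
    nsmul_eq_mul, mul_one, Nat.cast_inj]
  exact Finset.card_fin _

theorem hsNorm_of_isStarProjection : hsNorm b P = √(Module.finrank ℂ (P : H →ₗ[ℂ] H).range) := by
  rw [hsNorm, ((SVD.ofIsStarProjection hP).hasSum_norm_sq_apply b).tsum_eq]
  simp only [SVD.ofIsStarProjection, one_pow, Finset.sum_const, nsmul_eq_mul, mul_one,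
    Nat.cast_nonneg, Real.sqrt_inj, Nat.cast_inj]
  exact Finset.card_fin _

end Projection

section Corner

variable [CompleteSpace H] {ι : Type*} (b : HilbertBasis ι ℂ H) {P : H →L[ℂ] H}
  (hP : IsStarProjection P) [FiniteDimensional ℂ (P : H →ₗ[ℂ] H).range] (A : H →L[ℂ] H)
include hP

theorem trNorm_corner_le_trNorm_commutator :
    trNorm b ((1 - P) * A * P) ≤ trNorm b (A * P - P * A) := by
  rw [← hP.one_sub_mul_commutator]
  exact (trNorm_mul_le b _ _).trans
    (mul_le_of_le_one_left (trNorm_nonneg b _) (hP.one_sub.norm_le _))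

theorem trNorm_commutator_le :
    trNorm b (A * P - P * A) ≤ trNorm b ((1 - P) * A * P) + trNorm b ((1 - P) * star A * P) := by
  rw [commutator_eq_corner_sub_corner, ← trNorm_star b ((1 - P) * star A * P),
    star_corner hP.isSelfAdjoint]
  exact trNorm_sub_le b _ _

theorem hsNorm_sq_commutator :
    hsNorm b (A * P - P * A) ^ 2
      = hsNorm b ((1 - P) * A * P) ^ 2 + hsNorm b ((1 - P) * star A * P) ^ 2 := by
  rw [hsNorm_sq_eq_add_of_isStarProjection b _ hP, hP.mul_commutator, hP.one_sub_mul_commutator,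
    hsNorm_neg, ← star_corner hP.isSelfAdjoint, hsNorm_star, add_comm]

theorem hsNorm_corner_le_hsNorm_commutator :
    hsNorm b ((1 - P) * A * P) ≤ hsNorm b (A * P - P * A) := by
  refine (pow_le_pow_iff_left₀ (hsNorm_nonneg b _) (hsNorm_nonneg b _) two_ne_zero).1 ?_
  rw [hsNorm_sq_commutator b hP]
  exact le_add_of_nonneg_right (sq_nonneg _)

theorem hsNorm_commutator_le :
    hsNorm b (A * P - P * A) ≤ hsNorm b ((1 - P) * A * P) + hsNorm b ((1 - P) * star A * P) := by
  refine (pow_le_pow_iff_left₀ (hsNorm_nonneg b _)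
    (add_nonneg (hsNorm_nonneg b _) (hsNorm_nonneg b _)) two_ne_zero).1 ?_
  rw [hsNorm_sq_commutator b hP, add_sq]
  have := mul_nonneg (hsNorm_nonneg b ((1 - P) * A * P)) (hsNorm_nonneg b ((1 - P) * star A * P))
  linarith

theorem hsNorm_corner_sq_le :
    hsNorm b ((1 - P) * A * P) ^ 2 ≤ ‖A‖ * trNorm b ((1 - P) * A * P) := by
  refine (hsNorm_sq_le_opNorm_mul_trNorm b _).trans
    (mul_le_mul_of_nonneg_right ?_ (trNorm_nonneg b _))
  calc ‖(1 - P) * A * P‖ ≤ ‖1 - P‖ * ‖A‖ * ‖P‖ := norm_mul₃_le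
    _ ≤ 1 * ‖A‖ * 1 := by gcongr; exacts [hP.one_sub.norm_le _, hP.norm_le _]
    _ = ‖A‖ := by ring

end Corner

theorem IsFinRankProj.isStarProjection [CompleteSpace H] {P : H →L[ℂ] H} (hP : IsFinRankProj P) :
    IsStarProjection P :=
  ⟨hP.1, hP.2.1⟩

theorem IsFinRankProj.finrank_pos [CompleteSpace H] {P : H →L[ℂ] H} (hP : IsFinRankProj P)
    (hP0 : P ≠ 0) : 0 < Module.finrank ℂ (P : H →ₗ[ℂ] H).range := by
  have := hP.2.2
  refine Nat.pos_of_ne_zero fun h => hP0 ?_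
  rw [Submodule.finrank_eq_zero, LinearMap.range_eq_bot] at h
  exact ContinuousLinearMap.coe_injective h

theorem IsFinRankProj.trNorm_pos [CompleteSpace H] {ι : Type*} (b : HilbertBasis ι ℂ H)
    {P : H →L[ℂ] H} (hP : IsFinRankProj P) (hP0 : P ≠ 0) : 0 < trNorm b P := by
  have := hP.2.2
  rw [trNorm_of_isStarProjection b hP.isStarProjection]
  exact_mod_cast hP.finrank_pos hP0

theorem IsFinRankProj.hsNorm_pos [CompleteSpace H] {ι : Type*} (b : HilbertBasis ι ℂ H)
    {P : H →L[ℂ] H} (hP : IsFinRankProj P) (hP0 : P ≠ 0) : 0 < hsNorm b P := by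
  have := hP.2.2
  rw [hsNorm_of_isStarProjection b hP.isStarProjection, Real.sqrt_pos]
  exact_mod_cast hP.finrank_pos hP0

section Sequence

variable [CompleteSpace H] {ι : Type*} (b : HilbertBasis ι ℂ H) {P : ℕ → H →L[ℂ] H}
  (hP : ∀ n, IsFinRankProj (P n) ∧ P n ≠ 0) (A : H →L[ℂ] H)
include hP

theorem tendsto_trNorm_corner_of_commutator
    (h : Tendsto (fun n => trNorm b (A * P n - P n * A) / trNorm b (P n)) atTop (𝓝 0)) :
    Tendsto (fun n => trNorm b ((1 - P n) * A * P n) / trNorm b (P n)) atTop (𝓝 0) := by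
  have := fun n => (hP n).1.2.2
  exact squeeze_zero_div (fun n => trNorm_nonneg b _) (fun n => (hP n).1.trNorm_pos b (hP n).2)
    (fun n => trNorm_corner_le_trNorm_commutator b (hP n).1.isStarProjection A) h

theorem tendsto_trNorm_commutator_of_corner
    (h : Tendsto (fun n => trNorm b ((1 - P n) * A * P n) / trNorm b (P n)) atTop (𝓝 0))
    (h' : Tendsto (fun n => trNorm b ((1 - P n) * star A * P n) / trNorm b (P n)) atTop (𝓝 0)) :
    Tendsto (fun n => trNorm b (A * P n - P n * A) / trNorm b (P n)) atTop (𝓝 0) := by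
  have := fun n => (hP n).1.2.2
  refine squeeze_zero_div (fun n => trNorm_nonneg b _) (fun n => (hP n).1.trNorm_pos b (hP n).2)
    (fun n => trNorm_commutator_le b (hP n).1.isStarProjection A) ?_
  simpa only [add_div, add_zero] using h.add h'

theorem tendsto_hsNorm_corner_of_commutator
    (h : Tendsto (fun n => hsNorm b (A * P n - P n * A) / hsNorm b (P n)) atTop (𝓝 0)) :
    Tendsto (fun n => hsNorm b ((1 - P n) * A * P n) / hsNorm b (P n)) atTop (𝓝 0) := by
  have := fun n => (hP n).1.2.2
  exact squeeze_zero_div (fun n => hsNorm_nonneg b _) (fun n => (hP n).1.hsNorm_pos b (hP n).2)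
    (fun n => hsNorm_corner_le_hsNorm_commutator b (hP n).1.isStarProjection A) h

theorem tendsto_hsNorm_commutator_of_corner
    (h : Tendsto (fun n => hsNorm b ((1 - P n) * A * P n) / hsNorm b (P n)) atTop (𝓝 0))
    (h' : Tendsto (fun n => hsNorm b ((1 - P n) * star A * P n) / hsNorm b (P n)) atTop (𝓝 0)) :
    Tendsto (fun n => hsNorm b (A * P n - P n * A) / hsNorm b (P n)) atTop (𝓝 0) := by
  have := fun n => (hP n).1.2.2
  refine squeeze_zero_div (fun n => hsNorm_nonneg b _) (fun n => (hP n).1.hsNorm_pos b (hP n).2)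
    (fun n => hsNorm_commutator_le b (hP n).1.isStarProjection A) ?_
  simpa only [add_div, add_zero] using h.add h'

/-- `(‖C‖₂ / ‖P‖₂)² ≤ ‖A‖ ‖C‖₁ / ‖P‖₁` for the corner `C = (1 - P) A P`. -/
theorem tendsto_hsNorm_corner_of_trNorm_corner
    (h : Tendsto (fun n => trNorm b ((1 - P n) * A * P n) / trNorm b (P n)) atTop (𝓝 0)) :
    Tendsto (fun n => hsNorm b ((1 - P n) * A * P n) / hsNorm b (P n)) atTop (𝓝 0) := by
  have := fun n => (hP n).1.2.2
  have hsqrt : Tendsto (fun n => √(‖A‖ * (trNorm b ((1 - P n) * A * P n) / trNorm b (P n))))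
      atTop (𝓝 0) := by
    simpa using (h.const_mul ‖A‖).sqrt
  refine squeeze_zero (fun n => div_nonneg (hsNorm_nonneg b _) (hsNorm_nonneg b _))
    (fun n => Real.le_sqrt_of_sq_le ?_) hsqrt
  have hPn := (hP n).1.isStarProjection
  rw [div_pow, hsNorm_of_isStarProjection b hPn, Real.sq_sqrt (Nat.cast_nonneg _),
    ← trNorm_of_isStarProjection b hPn, mul_div_assoc']
  gcongr
  · exact trNorm_nonneg b _
  · exact hsNorm_corner_sq_le b hPn A

/-- `‖C‖₁ / ‖P‖₁ ≤ ‖C‖₂ / ‖P‖₂` for the corner `C = (1 - P) A P`, as `rank C ≤ rank P`. -/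
theorem tendsto_trNorm_corner_of_hsNorm_corner
    (h : Tendsto (fun n => hsNorm b ((1 - P n) * A * P n) / hsNorm b (P n)) atTop (𝓝 0)) :
    Tendsto (fun n => trNorm b ((1 - P n) * A * P n) / trNorm b (P n)) atTop (𝓝 0) := by
  have := fun n => (hP n).1.2.2
  refine squeeze_zero (fun n => div_nonneg (trNorm_nonneg b _) (trNorm_nonneg b _))
    (fun n => ?_) h
  have hPn := (hP n).1.isStarProjection
  have hd : (0 : ℝ) < Module.finrank ℂ (P n : H →ₗ[ℂ] H).range := by
    exact_mod_cast (hP n).1.finrank_pos (hP n).2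
  rw [hsNorm_of_isStarProjection b hPn, trNorm_of_isStarProjection b hPn,
    div_le_div_iff₀ hd (Real.sqrt_pos.2 hd)]
  calc trNorm b ((1 - P n) * A * P n) * √(Module.finrank ℂ (P n : H →ₗ[ℂ] H).range)
      ≤ √(Module.finrank ℂ (P n : H →ₗ[ℂ] H).range) * hsNorm b ((1 - P n) * A * P n)
          * √(Module.finrank ℂ (P n : H →ₗ[ℂ] H).range) := by
        gcongr
        exact trNorm_mul_le_sqrt_finrank_mul_hsNorm b _ _
    _ = hsNorm b ((1 - P n) * A * P n) * Module.finrank ℂ (P n : H →ₗ[ℂ] H).range := by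
        rw [mul_comm _ (hsNorm b _), mul_assoc, Real.mul_self_sqrt hd.le]

end Sequence

theorem folnerSeq_tfae_trace_and_hilbertSchmidt_conditions
    {H : Type*} [NormedAddCommGroup H] [InnerProductSpace ℂ H] [CompleteSpace H]
    {ι : Type*} (b : HilbertBasis ι ℂ H)
    (𝒯 : Set (H →L[ℂ] H)) (h𝒯 : ∀ A ∈ 𝒯, star A ∈ 𝒯)
    (P : ℕ → H →L[ℂ] H) (hP : ∀ n, IsFinRankProj (P n) ∧ P n ≠ 0) :
    List.TFAE
      [∀ A ∈ 𝒯, Tendsto (fun n => trNorm b (A * P n - P n * A) / trNorm b (P n)) atTop (𝓝 0),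
       ∀ A ∈ 𝒯, Tendsto (fun n => hsNorm b (A * P n - P n * A) / hsNorm b (P n)) atTop (𝓝 0),
       ∀ A ∈ 𝒯, Tendsto (fun n => trNorm b ((1 - P n) * A * P n) / trNorm b (P n)) atTop (𝓝 0),
       ∀ A ∈ 𝒯, Tendsto (fun n => hsNorm b ((1 - P n) * A * P n) / hsNorm b (P n)) atTop (𝓝 0)]
    ∧ (IsFolnerSeq b 𝒯 P ↔
        ∀ A ∈ 𝒯, Tendsto (fun n => hsNorm b (A * P n - P n * A) / hsNorm b (P n)) atTop (𝓝 0)) := by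
  refine ⟨?_, fun h => h.2, fun h => ⟨hP, h⟩⟩
  tfae_have 1 → 3 := fun h A hA => tendsto_trNorm_corner_of_commutator b hP A (h A hA)
  tfae_have 3 → 1 := fun h A hA =>
    tendsto_trNorm_commutator_of_corner b hP A (h A hA) (h (star A) (h𝒯 A hA))
  tfae_have 2 → 4 := fun h A hA => tendsto_hsNorm_corner_of_commutator b hP A (h A hA)
  tfae_have 4 → 2 := fun h A hA =>
    tendsto_hsNorm_commutator_of_corner b hP A (h A hA) (h (star A) (h𝒯 A hA))
  tfae_have 3 → 4 := fun h A hA => tendsto_hsNorm_corner_of_trNorm_corner b hP A (h A hA)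
  tfae_have 4 → 3 := fun h A hA => tendsto_trNorm_corner_of_hsNorm_corner b hP A (h A hA)
  tfae_finish
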